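/- arXiv:1307.6949 — 2 statements merged into one kernel-verified Lean document; each statement's English description precedes it below -/
import Mathlib

section
/- Let N ≥ 1 and suppose u : ℝ^N → ℝ is a smooth function satisfying Δu ≥ ε u^η on ℝ^N for constants ε > 0 and η > 1, together with −u also satisfying Δ(−u) ≥ ε (−u)^η wherever −u > 0 (i.e., Δ(u⁺) ≥ ε (u⁺)^η and Δ(u⁻) ≥ ε (u⁻)^η in the distributional sense). If u is bounded, then u = 0. -/
open Real

noncomputable def lap {N : ℕ} (u : EuclideanSpace ℝ (Fin N) → ℝ)
    (x : EuclideanSpace ℝ (Fin N)) : ℝ :=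
  ∑ i : Fin N, fderiv ℝ (fun y => fderiv ℝ u y (EuclideanSpace.single i (1:ℝ))) x
    (EuclideanSpace.single i (1:ℝ))

open Filter Topology Metric

private lemma secderiv_nonpos {g : ℝ → ℝ} {d : ℝ} (hg : Differentiable ℝ g)
    (hmax : IsLocalMax g 0) (hd : HasDerivAt (deriv g) d 0) : d ≤ 0 := by
  by_contra h
  push_neg at h
  have h0 : deriv g 0 = 0 := hmax.deriv_eq_zero
  have hs : Tendsto (slope (deriv g) 0) (𝓝[≠] 0) (𝓝 d) := hasDerivAt_iff_tendsto_slope.1 hd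
  have h1 : ∀ᶠ t in 𝓝[>] (0:ℝ), 0 < slope (deriv g) 0 t :=
    ((hs.mono_left (nhdsWithin_mono _ (fun t ht => ne_of_gt ht))).eventually_const_lt h)
  have h2 : ∀ᶠ t in 𝓝[>] (0:ℝ), g t ≤ g 0 := hmax.filter_mono nhdsWithin_le_nhds
  obtain ⟨s, hs0, hsub⟩ := mem_nhdsGT_iff_exists_Ioc_subset.1 ((h1.and h2).filter_mono le_rfl)
  have hderivpos : ∀ t ∈ Set.Ioc (0:ℝ) s, 0 < deriv g t := by
    intro t ht
    have hslope := (hsub ht).1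
    rw [slope_def_field, h0] at hslope
    have ht0 : (0:ℝ) < t := ht.1
    rcases div_pos_iff.1 (by simpa using hslope) with ⟨ha, _⟩ | ⟨_, hb⟩
    · linarith
    · linarith
  have hmono : StrictMonoOn g (Set.Icc 0 s) :=
    strictMonoOn_of_deriv_pos (convex_Icc 0 s) hg.continuous.continuousOn
      (fun t ht => by
        rw [interior_Icc] at ht
        exact hderivpos t ⟨ht.1, ht.2.le⟩)
  have hlt : g 0 < g s :=
    hmono (Set.left_mem_Icc.2 hs0.le) (Set.right_mem_Icc.2 hs0.le) hs0
  have := (hsub ⟨hs0, le_refl s⟩).2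
  linarith

private lemma line_hasDerivAt {N : ℕ} {u : EuclideanSpace ℝ (Fin N) → ℝ}
    (hu : Differentiable ℝ u) (x e : EuclideanSpace ℝ (Fin N)) (t : ℝ) :
    HasDerivAt (fun s : ℝ => u (x + s • e)) (fderiv ℝ u (x + t • e) e) t := by
  have hL : HasDerivAt (fun s : ℝ => x + s • e) e t := by
    simpa using ((hasDerivAt_id t).smul_const e).const_add x
  exact (hu (x + t • e)).hasFDerivAt.comp_hasDerivAt t hL

private lemma line_hasDerivAt2 {N : ℕ} {u : EuclideanSpace ℝ (Fin N) → ℝ}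
    (hu : ContDiff ℝ (⊤ : ℕ∞) u) (x e : EuclideanSpace ℝ (Fin N)) :
    HasDerivAt (fun t : ℝ => fderiv ℝ u (x + t • e) e)
      (fderiv ℝ (fun y => fderiv ℝ u y e) x e) 0 := by
  have hF : DifferentiableAt ℝ (fun y => fderiv ℝ u y e) (x + (0:ℝ) • e) :=
    (((hu.fderiv_right (m := (⊤ : ℕ∞)) (by simp)).differentiable (by simp)) _).clm_apply (differentiableAt_const e)
  have hL : HasDerivAt (fun s : ℝ => x + s • e) e 0 := by
    simpa using ((hasDerivAt_id (0:ℝ)).smul_const e).const_add x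
  have h := hF.hasFDerivAt.comp_hasDerivAt 0 hL
  simpa [Function.comp_def] using h

private lemma nonpos_of_subsolution {N : ℕ} (ε η : ℝ) (hε : 0 < ε) (hη : 1 < η)
    (v : EuclideanSpace ℝ (Fin N) → ℝ) (hv : ContDiff ℝ (⊤ : ℕ∞) v)
    (hsub : ∀ x, 0 < v x → lap v x ≥ ε * (v x) ^ η)
    (M : ℝ) (hb : ∀ x, |v x| ≤ M) : ∀ x, v x ≤ 0 := by
  intro a
  by_contra hpos
  push_neg at hpos
  set m := v a with hm
  have hM0 : 0 ≤ M := le_trans (abs_nonneg _) (hb a)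
  have hP : 0 < ε * m ^ η := mul_pos hε (Real.rpow_pos_of_pos hpos η)
  set P := ε * m ^ η with hPdef
  set δ := P / (2 * N + 1) with hδdef
  have hden : (0:ℝ) < 2 * N + 1 := by positivity
  have hδ : 0 < δ := div_pos hP hden
  set R := Real.sqrt ((2 * M + 1) / δ) with hRdef
  have hR2 : δ * R ^ 2 = 2 * M + 1 := by
    rw [hRdef, Real.sq_sqrt (by positivity)]
    field_simp
  have hR0 : 0 ≤ R := Real.sqrt_nonneg _
  set Q : EuclideanSpace ℝ (Fin N) → ℝ := fun y => ∑ j, (y j - a j) ^ 2 with hQdef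
  have hQcont : Continuous Q := by
    apply continuous_finset_sum
    intro j _
    exact (((EuclideanSpace.proj j).continuous).sub continuous_const).pow 2
  have hQa : Q a = 0 := by simp [hQdef]
  have hQnonneg : ∀ y, 0 ≤ Q y := fun y => Finset.sum_nonneg (fun j _ => sq_nonneg _)
  have hQnorm : ∀ y, Q y = ‖y - a‖ ^ 2 := by
    intro y
    rw [EuclideanSpace.norm_eq, Real.sq_sqrt (Finset.sum_nonneg (fun j _ => sq_nonneg _))]
    simp [hQdef, PiLp.sub_apply, sq_abs]
  set φ : EuclideanSpace ℝ (Fin N) → ℝ := fun y => v y - δ * Q y with hφdef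
  have hφcont : Continuous φ := hv.continuous.sub (continuous_const.mul hQcont)
  obtain ⟨z, hzmem, hzmax⟩ := (isCompact_closedBall a R).exists_isMaxOn
    ⟨a, mem_closedBall_self hR0⟩ hφcont.continuousOn
  have hφa : φ a = m := by simp [hφdef, hQa, hm]
  have hφz : m ≤ φ z := hφa ▸ hzmax (mem_closedBall_self hR0)
  have hvQz : φ z = v z - δ * Q z := rfl
  have hz_int : z ∈ ball a R := by
    by_contra hzb
    have hdist : dist z a = R :=
      le_antisymm (mem_closedBall.1 hzmem) (not_lt.1 (fun h => hzb (mem_ball.2 h)))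
    have hQz : Q z = R ^ 2 := by rw [hQnorm z, ← dist_eq_norm, hdist]
    have hvzM : v z ≤ M := le_trans (le_abs_self _) (hb z)
    rw [hvQz, hQz] at hφz
    linarith
  have hlocal : IsLocalMax φ z :=
    hzmax.isLocalMax (Filter.mem_of_superset (isOpen_ball.mem_nhds hz_int)
      ball_subset_closedBall)
  have hvz : m ≤ v z := by
    have h1 : 0 ≤ δ * Q z := mul_nonneg hδ.le (hQnonneg z)
    rw [hvQz] at hφz
    linarith
  -- key directional estimate
  have key : ∀ i : Fin N,
      fderiv ℝ (fun y => fderiv ℝ v y (EuclideanSpace.single i (1:ℝ))) z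
        (EuclideanSpace.single i (1:ℝ)) ≤ 2 * δ := by
    intro i
    set e : EuclideanSpace ℝ (Fin N) := EuclideanSpace.single i (1:ℝ) with hedef
    set b : Fin N → ℝ := fun j => e j with hbdef
    have hb2 : ∑ j, 2 * b j * b j = 2 := by
      simp [hbdef, hedef, EuclideanSpace.single_apply, mul_ite, ite_mul]
    have coords : ∀ (t : ℝ) (j : Fin N), (z + t • e) j = z j + t * b j := by
      intro t j
      simp [hbdef, PiLp.add_apply, PiLp.smul_apply, smul_eq_mul]
    set ψ : ℝ → ℝ := fun t => ∑ j, (z j + t * b j - a j) ^ 2 with hψdef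
    have hψQ : ∀ t : ℝ, Q (z + t • e) = ψ t := by
      intro t
      simp only [hQdef, hψdef, coords]
    set p : ℝ → ℝ := fun t => ∑ j, 2 * (z j + t * b j - a j) * b j with hpdef
    have hin : ∀ (t : ℝ) (j : Fin N),
        HasDerivAt (fun s : ℝ => z j + s * b j - a j) (b j) t := by
      intro t j
      simpa using (((hasDerivAt_id t).mul_const (b j)).const_add (z j)).sub_const (a j)
    have hψd : ∀ t, HasDerivAt ψ (p t) t := by
      intro t
      apply HasDerivAt.fun_sum
      intro j _
      simpa using (hin t j).fun_pow 2
    have hpd : HasDerivAt p 2 0 := by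
      rw [← hb2]
      apply HasDerivAt.fun_sum
      intro j _
      exact ((hin 0 j).const_mul 2).mul_const (b j)
    have hld := line_hasDerivAt (hv.differentiable (by simp)) z e
    have h2d := line_hasDerivAt2 hv z e
    set g : ℝ → ℝ := fun t => v (z + t • e) - δ * ψ t with hgdef
    have hgd : ∀ t, HasDerivAt g (fderiv ℝ v (z + t • e) e - δ * p t) t :=
      fun t => (hld t).sub ((hψd t).const_mul δ)
    have hgdiff : Differentiable ℝ g := fun t => (hgd t).differentiableAt
    have hderivg : deriv g = fun t => fderiv ℝ v (z + t • e) e - δ * p t :=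
      funext fun t => (hgd t).deriv
    have hgd2 : HasDerivAt (deriv g)
        (fderiv ℝ (fun y => fderiv ℝ v y e) z e - δ * 2) 0 := by
      rw [hderivg]
      exact h2d.sub (hpd.const_mul δ)
    have hglocal : IsLocalMax g 0 := by
      have htend : Tendsto (fun t : ℝ => z + t • e) (𝓝 0) (𝓝 z) := by
        have hc : Continuous fun t : ℝ => z + t • e :=
          continuous_const.add (continuous_id.smul continuous_const)
        simpa using hc.tendsto 0
      have hev := htend.eventually hlocal
      have hg0 : g 0 = φ z := by
        simp [hgdef, hφdef, ← hψQ 0]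
      filter_upwards [hev] with t ht
      rw [hg0]
      calc g t = φ (z + t • e) := by simp [hgdef, hφdef, hψQ t]
        _ ≤ φ z := ht
    have := secderiv_nonpos hgdiff hglocal hgd2
    linarith
  have hlap : lap v z ≤ 2 * N * δ := by
    unfold lap
    calc (∑ i : Fin N, fderiv ℝ (fun y => fderiv ℝ v y (EuclideanSpace.single i (1:ℝ))) z
          (EuclideanSpace.single i (1:ℝ)))
        ≤ ∑ _i : Fin N, 2 * δ := Finset.sum_le_sum (fun i _ => key i)
      _ = N * (2 * δ) := by simp [Finset.sum_const, Finset.card_univ]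
      _ = 2 * N * δ := by ring
  have hlap2 : P ≤ lap v z := by
    have h := hsub z (lt_of_lt_of_le hpos hvz)
    have hmono : ε * m ^ η ≤ ε * (v z) ^ η :=
      mul_le_mul_of_nonneg_left (Real.rpow_le_rpow hpos.le hvz (by linarith)) hε.le
    rw [hPdef]
    linarith [h]
  have hfin : 2 * N * δ < P := by
    have hcancel : δ * (2 * N + 1) = P := div_mul_cancel₀ _ hden.ne'
    have : 2 * (N:ℝ) * δ = δ * (2 * N + 1) - δ := by ring
    linarith
  linarith

theorem keller_osserman_liouville_bounded (N : ℕ) (hN : 1 ≤ N) (ε η : ℝ)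
    (hε : 0 < ε) (hη : 1 < η) (u : EuclideanSpace ℝ (Fin N) → ℝ)
    (hu : ContDiff ℝ (⊤ : ℕ∞) u)
    (hsubpos : ∀ x, 0 < u x → lap u x ≥ ε * (u x) ^ η)
    (hsubneg : ∀ x, u x < 0 → lap (-u) x ≥ ε * (-(u x)) ^ η)
    (hb : ∃ M, ∀ x, |u x| ≤ M) :
    u = 0 := by
  obtain ⟨M, hb⟩ := hb
  have h1 : ∀ x, u x ≤ 0 := nonpos_of_subsolution ε η hε hη u hu hsubpos M hb
  have h2 : ∀ x, (-u) x ≤ 0 :=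
    nonpos_of_subsolution ε η hε hη (-u) hu.neg
      (fun x hx => by
        have hx' : u x < 0 := by simpa using hx
        simpa using hsubneg x hx')
      M (fun x => by simpa using hb x)
  funext x
  have h2x := h2 x
  simp only [Pi.neg_apply, neg_nonpos] at h2x
  exact le_antisymm (h1 x) h2x
end

section
/- Let N ≥ 1 and let u, v ∈ C²(ℝ^N) be a bounded solution of −Δu = u v² − λ u³, −Δv = v u² − λ v³ with u, v ≥ 0 and λ > 1. Then u = v = 0. -/
/-
If `ψ` is `C²`, bounded above and `Δψ ≥ c ψ³` wherever `ψ > 0`, then `ψ ≤ 0`: for `ε > 0` the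
paraboloid `V = ε + b |x - x₀|²` with `2 N b ≤ c ε³` satisfies `ΔV ≤ c V³`, and `ψ - V → -∞`, so
`ψ - V` has a global maximum at some `y`, where `Δψ(y) ≤ ΔV(y)`. If `ψ(x₀) > ε`, then
`ψ(y) > V(y) ≥ ε`, and `c ε³ < c ψ(y)³ ≤ Δψ(y) ≤ 2 N b ≤ c ε³`.

For the system, `Δ(u - v) - λ (u - v)³ = (3λ + 1) u v (u - v) ≥ 0` where `u > v`, so `u ≤ v`, and
by symmetry `u = v`. Then `Δu = (λ - 1) u³` with `λ > 1` forces `u ≤ 0`, hence `u = v = 0`.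
-/

open Real

open Filter Topology

theorem IsLocalMax.deriv_deriv_nonpos {g : ℝ → ℝ} {t : ℝ} (h : IsLocalMax g t)
    (hg : ContinuousAt g t) : deriv (deriv g) t ≤ 0 := by
  by_contra! hpos
  have hmin : IsLocalMin g t := isLocalMin_of_deriv_deriv_pos hpos h.deriv_eq_zero hg
  have hconst : g =ᶠ[𝓝 t] fun _ => g t := (h.and hmin).mono fun s hs => le_antisymm hs.1 hs.2
  have hderiv : deriv g =ᶠ[𝓝 t] fun _ => 0 := hconst.deriv.trans (by simp)
  simp [hderiv.deriv_eq] at hpos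

section SecondDerivative

variable {E F : Type*} [NormedAddCommGroup E] [NormedSpace ℝ E] [NormedAddCommGroup F]
  [NormedSpace ℝ F]

theorem ContDiff.differentiable_fderiv_apply {f : E → F} (hf : ContDiff ℝ 2 f) (e : E) :
    Differentiable ℝ (fun z => fderiv ℝ f z e) :=
  ((hf.fderiv_right (m := 1) one_add_one_eq_two.le).differentiable one_ne_zero).clm_apply
    (differentiable_const e)

theorem IsLocalMax.fderiv_fderiv_apply_nonpos {f : E → ℝ} {y : E} (h : IsLocalMax f y)
    (hf : ContDiff ℝ 2 f) (e : E) : fderiv ℝ (fun z => fderiv ℝ f z e) y e ≤ 0 := by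
  have hline : ∀ t : ℝ, HasDerivAt (fun t : ℝ => y + t • e) e t := fun t => by
    simpa using ((hasDerivAt_id t).smul_const e).const_add y
  have hderiv : deriv (fun t : ℝ => f (y + t • e)) = fun t => fderiv ℝ f (y + t • e) e :=
    funext fun t =>
      ((hf.differentiable two_ne_zero _).hasFDerivAt.comp_hasDerivAt t (hline t)).deriv
  have hderiv2 : deriv (deriv (fun t : ℝ => f (y + t • e))) 0 =
      fderiv ℝ (fun z => fderiv ℝ f z e) y e := by
    rw [hderiv]
    exact ((hf.differentiable_fderiv_apply e y).hasFDerivAt.comp_hasDerivAt_of_eq 0 (hline 0)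
      (by simp)).deriv
  rw [← hderiv2]
  refine IsLocalMax.deriv_deriv_nonpos ?_ (hf.continuous.continuousAt.comp (hline 0).continuousAt)
  exact IsLocalMax.comp_continuous (by simpa using h) (hline 0).continuousAt

end SecondDerivative

section Laplacian

variable {N : ℕ}

theorem lap_sub {u v : EuclideanSpace ℝ (Fin N) → ℝ} (hu : ContDiff ℝ 2 u) (hv : ContDiff ℝ 2 v)
    (x : EuclideanSpace ℝ (Fin N)) : lap (u - v) x = lap u x - lap v x := by
  simp only [lap, ← Finset.sum_sub_distrib]
  refine Finset.sum_congr rfl fun i _ => ?_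
  set e : EuclideanSpace ℝ (Fin N) := EuclideanSpace.single i 1
  have hfirst : (fun z => fderiv ℝ (u - v) z e) =
      (fun z => fderiv ℝ u z e) - (fun z => fderiv ℝ v z e) := funext fun z => by
    rw [fderiv_sub ((hu.differentiable two_ne_zero) z) ((hv.differentiable two_ne_zero) z)]
    rfl
  rw [hfirst, fderiv_sub (hu.differentiable_fderiv_apply e x) (hv.differentiable_fderiv_apply e x)]
  rfl

theorem lap_nonpos_of_isLocalMax {f : EuclideanSpace ℝ (Fin N) → ℝ}
    {y : EuclideanSpace ℝ (Fin N)} (hf : ContDiff ℝ 2 f) (h : IsLocalMax f y) : lap f y ≤ 0 :=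
  Finset.sum_nonpos fun _ _ => h.fderiv_fderiv_apply_nonpos hf _

theorem lap_const_add_mul_norm_sub_sq (a b : ℝ) (x₀ x : EuclideanSpace ℝ (Fin N)) :
    lap (fun z => a + b * ‖z - x₀‖ ^ 2) x = 2 * N * b := by
  have hfirst : ∀ e, (fun z => fderiv ℝ (fun z => a + b * ‖z - x₀‖ ^ 2) z e) =
      fun z => 2 * b * inner ℝ (z - x₀) e := fun e => funext fun z => by
    have hsq := (hasFDerivAt_sub_const (𝕜 := ℝ) (x := z) x₀).norm_sq
    rw [(hsq.const_mul b).const_add a |>.fderiv]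
    simp only [map_sub, ContinuousLinearMap.comp_id, smul_apply, sub_apply, coe_innerSL_apply,
      nsmul_eq_mul, Nat.cast_ofNat, smul_eq_mul, inner_sub_left]
    ring
  have hsecond : ∀ e, fderiv ℝ (fun z => 2 * b * inner ℝ (z - x₀) e) x e = 2 * b * ‖e‖ ^ 2 :=
    fun e => by
      have hinner := (hasFDerivAt_sub_const (𝕜 := ℝ) (x := x) x₀).inner ℝ (hasFDerivAt_const e x)
      rw [(hinner.const_mul (2 * b)).fderiv]
      simp
  simp only [lap, hfirst, hsecond, PiLp.norm_single, norm_one, one_pow, mul_one,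
    Finset.sum_const, Finset.card_univ, Fintype.card_fin, nsmul_eq_mul]
  ring

theorem nonpos_of_cube_le_lap {c : ℝ} (hc : 0 < c) {ψ : EuclideanSpace ℝ (Fin N) → ℝ}
    (hψ : ContDiff ℝ 2 ψ) (hbdd : BddAbove (Set.range ψ))
    (hsub : ∀ x, 0 < ψ x → c * ψ x ^ 3 ≤ lap ψ x) (x₀ : EuclideanSpace ℝ (Fin N)) :
    ψ x₀ ≤ 0 := by
  refine le_of_forall_pos_le_add fun ε hε => ?_
  by_contra! hlt
  rw [zero_add] at hlt
  obtain ⟨M, hM⟩ := hbdd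
  set b := c * ε ^ 3 / (2 * (N + 1)) with hb_def
  have hb : 0 < b := by positivity
  have hNb : 2 * N * b ≤ c * ε ^ 3 := by
    rw [hb_def, mul_div_assoc', div_le_iff₀ (by positivity)]
    nlinarith [pow_pos hε 3]
  set V : EuclideanSpace ℝ (Fin N) → ℝ := fun z => ε + b * ‖z - x₀‖ ^ 2
  have hV : ContDiff ℝ 2 V := contDiff_const.add
    (contDiff_const.mul ((contDiff_norm_sq ℝ).comp (contDiff_id.sub contDiff_const)))
  have hVx₀ : V x₀ = ε := by simp [V]
  have hfar : ∀ᶠ z in cocompact _, (ψ - V) z ≤ (ψ - V) x₀ := by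
    filter_upwards [(tendsto_dist_right_cocompact_atTop x₀).eventually_ge_atTop
      (max 1 ((M - ψ x₀) / b))] with z hz
    rw [dist_eq_norm, max_le_iff, div_le_iff₀ hb] at hz
    have hψz : ψ z ≤ M := hM ⟨z, rfl⟩
    have hsq : ‖z - x₀‖ ≤ ‖z - x₀‖ ^ 2 := by nlinarith
    rw [Pi.sub_apply, Pi.sub_apply, hVx₀]
    nlinarith [mul_le_mul_of_nonneg_right hsq hb.le]
  obtain ⟨y, hy⟩ := (hψ.continuous.sub hV.continuous).exists_forall_ge' x₀ hfar
  have hlap : lap (ψ - V) y ≤ 0 :=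
    lap_nonpos_of_isLocalMax (hψ.sub hV) (Eventually.of_forall hy)
  rw [lap_sub hψ hV, lap_const_add_mul_norm_sub_sq] at hlap
  have hVy : ε ≤ V y := le_add_of_nonneg_right (by positivity)
  have hψy : V y < ψ y := by
    have := hy x₀
    rw [Pi.sub_apply, Pi.sub_apply, hVx₀] at this
    linarith
  have hcube : c * ε ^ 3 < c * ψ y ^ 3 :=
    mul_lt_mul_of_pos_left (pow_lt_pow_left₀ (hVy.trans_lt hψy) hε.le three_ne_zero) hc
  linarith [hsub y (by linarith)]

theorem le_of_lap_eq_cubic_system {lam : ℝ} (hlam : 0 < lam)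
    {u v : EuclideanSpace ℝ (Fin N) → ℝ} (hu : ContDiff ℝ 2 u) (hv : ContDiff ℝ 2 v)
    (hbdd : BddAbove (Set.range u)) (hv₀ : ∀ x, 0 ≤ v x)
    (hequ : ∀ x, -lap u x = u x * (v x) ^ 2 - lam * (u x) ^ 3)
    (heqv : ∀ x, -lap v x = v x * (u x) ^ 2 - lam * (v x) ^ 3) (x : EuclideanSpace ℝ (Fin N)) :
    u x ≤ v x := by
  obtain ⟨M, hM⟩ := hbdd
  have hbdd' : BddAbove (Set.range (u - v)) :=
    ⟨M, Set.forall_mem_range.2 fun x => (sub_le_self _ (hv₀ x)).trans (hM ⟨x, rfl⟩)⟩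
  refine sub_nonpos.1 (nonpos_of_cube_le_lap (ψ := u - v) hlam (hu.sub hv) hbdd' (fun x hx => ?_) x)
  rw [Pi.sub_apply, sub_pos] at hx
  have hcross : 0 ≤ (3 * lam + 1) * (u x * v x * (u x - v x)) := by
    have := hv₀ x
    have : 0 ≤ u x := by linarith
    positivity
  rw [lap_sub hu hv, Pi.sub_apply]
  linarith [hequ x, heqv x]

end Laplacian

theorem liouville_cubic_BE_general (N : ℕ) (lam : ℝ) (hlam : 1 < lam)
    (u v : EuclideanSpace ℝ (Fin N) → ℝ)
    (hu : ContDiff ℝ 2 u) (hv : ContDiff ℝ 2 v)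
    (hupos : ∀ x, 0 ≤ u x) (hvpos : ∀ x, 0 ≤ v x)
    (hub : ∃ M, ∀ x, |u x| ≤ M) (hvb : ∃ M, ∀ x, |v x| ≤ M)
    (hequ : ∀ x, -lap u x = u x * (v x) ^ 2 - lam * (u x) ^ 3)
    (heqv : ∀ x, -lap v x = v x * (u x) ^ 2 - lam * (v x) ^ 3) :
    u = 0 ∧ v = 0 := by
  obtain ⟨Mu, hMu⟩ := hub
  obtain ⟨Mv, hMv⟩ := hvb
  have hbddu : BddAbove (Set.range u) :=
    ⟨Mu, Set.forall_mem_range.2 fun x => (le_abs_self _).trans (hMu x)⟩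
  have hbddv : BddAbove (Set.range v) :=
    ⟨Mv, Set.forall_mem_range.2 fun x => (le_abs_self _).trans (hMv x)⟩
  have hlam₀ : 0 < lam := by linarith
  obtain rfl : u = v := funext fun x => le_antisymm
    (le_of_lap_eq_cubic_system hlam₀ hu hv hbddu hvpos hequ heqv x)
    (le_of_lap_eq_cubic_system hlam₀ hv hu hbddv hupos heqv hequ x)
  have hu₀ : u = 0 := funext fun x => le_antisymm
    (nonpos_of_cube_le_lap (sub_pos.2 hlam) hu hbddu (fun x _ => by linarith [hequ x]) x)
    (hupos x)
  exact ⟨hu₀, hu₀⟩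

theorem liouville_cubic_BE (N : ℕ) (hN : 1 ≤ N) (lam : ℝ) (hlam : 1 < lam)
    (u v : EuclideanSpace ℝ (Fin N) → ℝ)
    (hu : ContDiff ℝ 2 u) (hv : ContDiff ℝ 2 v)
    (hupos : ∀ x, 0 ≤ u x) (hvpos : ∀ x, 0 ≤ v x)
    (hub : ∃ M, ∀ x, |u x| ≤ M) (hvb : ∃ M, ∀ x, |v x| ≤ M)
    (hequ : ∀ x, -lap u x = u x * (v x) ^ 2 - lam * (u x) ^ 3)
    (heqv : ∀ x, -lap v x = v x * (u x) ^ 2 - lam * (v x) ^ 3) :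
    u = 0 ∧ v = 0 :=
  liouville_cubic_BE_general N lam hlam u v hu hv hupos hvpos hub hvb hequ heqv
end
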